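/- arXiv:1712.05872 — 2 statements merged into one kernel-verified Lean document; each statement's English description precedes it below -/
import Mathlib

section
/- Theorem (fractional consistency for right-hand side two): Let A be a finite linearly ordered set, x : A → [0,1] with ∑_{j∈A} x_j = 2, and y : {(h,j) : h,j ∈ A, h < j} → ℝ≥0 satisfying ∑_{h<j} y_{hj} + ∑_{j<h} y_{jh} = x_j for every j ∈ A. Then for all i < j in A: y_ij ≤ x_i, y_ij ≤ x_j, and y_ij ≥ x_i + x_j − 1. -/
theorem stmt_8 {ι : Type*} [LinearOrder ι] (A : Finset ι) (x : ι → ℝ) (y : ι → ι → ℝ)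
    (hx : ∀ j ∈ A, 0 ≤ x j ∧ x j ≤ 1)
    (hxsum : ∑ j ∈ A, x j = 2)
    (hy : ∀ h ∈ A, ∀ j ∈ A, h < j → 0 ≤ y h j)
    (hyeq : ∀ j ∈ A,
      ∑ h ∈ A.filter (fun h => h < j), y h j
        + ∑ h ∈ A.filter (fun h => j < h), y j h = x j) :
    ∀ i ∈ A, ∀ j ∈ A, i < j →
      y i j ≤ x i ∧ y i j ≤ x j ∧ x i + x j - 1 ≤ y i j := by
  set F : ι → ι → ℝ := fun a b => if a < b then y a b else 0 with hF
  have hFnn : ∀ a ∈ A, ∀ b ∈ A, 0 ≤ F a b := by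
    intro a ha b hb
    simp only [hF]
    split
    · exact hy a ha b hb ‹_›
    · exact le_refl 0
  -- rewrite hyeq in terms of F
  have hxF : ∀ j ∈ A, x j = (∑ h ∈ A, F h j) + ∑ h ∈ A, F j h := by
    intro j hj
    rw [← hyeq j hj, Finset.sum_filter, Finset.sum_filter]
  -- total sum equals 1
  have hT : ∑ a ∈ A, ∑ b ∈ A, F a b = 1 := by
    have h2 : ∑ j ∈ A, x j = (∑ a ∈ A, ∑ b ∈ A, F a b) + ∑ a ∈ A, ∑ b ∈ A, F a b := by
      rw [Finset.sum_congr rfl hxF, Finset.sum_add_distrib, Finset.sum_comm]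
    rw [hxsum] at h2
    linarith
  intro i hi j hj hij
  have hFij : F i j = y i j := by simp [hF, hij]
  have hxi := hxF i hi
  have hxj := hxF j hj
  have hcol_nonneg : ∀ c ∈ A, 0 ≤ ∑ h ∈ A, F h c := fun c hc =>
    Finset.sum_nonneg fun h hh => hFnn h hh c hc
  have hrow_nonneg : ∀ c ∈ A, 0 ≤ ∑ h ∈ A, F c h := fun c hc =>
    Finset.sum_nonneg fun h hh => hFnn c hc h hh
  refine ⟨?_, ?_, ?_⟩
  · -- y i j ≤ x i
    have : F i j ≤ ∑ h ∈ A, F i h :=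
      Finset.single_le_sum (fun h hh => hFnn i hi h hh) hj
    rw [hxi]
    have := hcol_nonneg i hi
    linarith [hFij]
  · have : F i j ≤ ∑ h ∈ A, F h j :=
      Finset.single_le_sum (fun h hh => hFnn h hh j hj) hi
    rw [hxj]
    have := hrow_nonneg j hj
    linarith [hFij]
  · -- lower bound
    have hne : i ≠ j := ne_of_lt hij
    have hjE : j ∈ A.erase i := Finset.mem_erase.mpr ⟨hne.symm, hj⟩
    set E : Finset ι := (A.erase i).erase j with hE
    have hEsub : E ⊆ A := fun a ha =>
      Finset.erase_subset _ _ (Finset.erase_subset _ _ ha)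
    -- decompose total sum
    have hsplit : ∑ a ∈ A, ∑ b ∈ A, F a b
        = (∑ b ∈ A, F i b) + ((∑ b ∈ A, F j b) + ∑ a ∈ E, ∑ b ∈ A, F a b) := by
      rw [← Finset.add_sum_erase _ _ hi, ← Finset.add_sum_erase _ _ hjE]
    -- decompose columns i and j
    have hFii : F i i = 0 := by simp [hF]
    have hFji : F j i = 0 := by simp [hF, not_lt.mpr (le_of_lt hij)]
    have hFjj : F j j = 0 := by simp [hF]
    have hcoli : ∑ h ∈ A, F h i = ∑ h ∈ E, F h i := by
      rw [← Finset.add_sum_erase _ (fun h => F h i) hi,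
          ← Finset.add_sum_erase _ (fun h => F h i) hjE, hFii, hFji]
      ring
    have hcolj : ∑ h ∈ A, F h j = F i j + ∑ h ∈ E, F h j := by
      rw [← Finset.add_sum_erase _ (fun h => F h j) hi,
          ← Finset.add_sum_erase _ (fun h => F h j) hjE, hFjj]
      ring
    -- termwise bound on E
    have hterm : ∀ h ∈ E, F h i + F h j ≤ ∑ b ∈ A, F h b := by
      intro h hh
      have hhA : h ∈ A := hEsub hh
      rw [← Finset.add_sum_erase A (F h) hi, ← Finset.add_sum_erase _ (F h) hjE]
      have hnn : 0 ≤ ∑ b ∈ E, F h b :=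
        Finset.sum_nonneg fun b hb => hFnn h hhA b (hEsub hb)
      linarith
    have hsum_le : ∑ h ∈ E, (F h i + F h j) ≤ ∑ h ∈ E, ∑ b ∈ A, F h b :=
      Finset.sum_le_sum hterm
    rw [Finset.sum_add_distrib] at hsum_le
    have h1 : ∑ a ∈ A, ∑ b ∈ A, F a b = ∑ b ∈ A, F i b + (∑ b ∈ A, F j b + ∑ a ∈ E, ∑ b ∈ A, F a b) := hsplit
    linarith [hxi, hxj, hcoli, hcolj, hFij, hT]
end

section
/- Suppose the constraint system consists of Conditions: for each (i,j) ∈ P ⊆ {(i,j) : i ≤ j}, f_ij = 1; f_ij ≥ z_jk for all k with i ∈ A_k (i ≤ j) and f_ji ≥ z_jk for all k with i ∈ A_k (j < i); ∑_{k: i∈A_k} z_jk ≥ f_ij and ∑_{k: j∈A_k} z_ik ≥ f_ij for all i ≤ j; z_ik ∈ {0,1}, f_ij ∈ [0,1]. Then for any feasible (z,f), the sets B_k := {i : z_ik = 1} and Q := {(i,j) : i ≤ j, f_ij ≥ 1} satisfy P ⊆ Q and Conditions 1 and 2: for each (i,j) ∈ Q there exist k with i ∈ A_k, j ∈ B_k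 and ℓ with j ∈ A_ℓ, i ∈ B_ℓ. -/
theorem stmt_13 {ι κ : Type*} [LinearOrder ι] [DecidableEq κ]
    (K : Finset κ) (A : κ → Finset ι) (P : Set (ι × ι))
    (z : ι → κ → ℝ) (f : ι → ι → ℝ)
    (hP : ∀ p ∈ P, p.1 ≤ p.2)
    (hfP : ∀ p ∈ P, f p.1 p.2 = 1)
    (h3a : ∀ k ∈ K, ∀ i ∈ A k, ∀ j, i ≤ j → z j k ≤ f i j)
    (h3b : ∀ k ∈ K, ∀ i ∈ A k, ∀ j, j < i → z j k ≤ f j i)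
    (h1 : ∀ i j, i ≤ j → f i j ≤ ∑ k ∈ K.filter (fun k => i ∈ A k), z j k)
    (h2 : ∀ i j, i ≤ j → f i j ≤ ∑ k ∈ K.filter (fun k => j ∈ A k), z i k)
    (hz : ∀ i, ∀ k ∈ K, z i k = 0 ∨ z i k = 1)
    (hf : ∀ i j, i ≤ j → 0 ≤ f i j ∧ f i j ≤ 1) :
    (∀ p ∈ P, p.1 ≤ p.2 ∧ 1 ≤ f p.1 p.2) ∧
    (∀ i j, i ≤ j → 1 ≤ f i j →
      (∃ k ∈ K, i ∈ A k ∧ z j k = 1) ∧ (∃ l ∈ K, j ∈ A l ∧ z i l = 1)) := by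
  refine ⟨fun p hp => ⟨hP p hp, le_of_eq (hfP p hp).symm⟩, fun i j hij hfij => ?_⟩
  have key : ∀ (a b : ι), f i j ≤ ∑ k ∈ K.filter (fun k => a ∈ A k), z b k →
      ∃ k ∈ K, a ∈ A k ∧ z b k = 1 := by
    intro a b hsum
    by_contra h
    push_neg at h
    have : ∑ k ∈ K.filter (fun k => a ∈ A k), z b k = 0 := by
      apply Finset.sum_eq_zero
      intro k hk
      rw [Finset.mem_filter] at hk
      rcases hz b k hk.1 with h0 | h1
      · exact h0
      · exact absurd h1 (h k hk.1 hk.2)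
    linarith
  exact ⟨key i j (h1 i j hij), key j i (h2 i j hij)⟩
end
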